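/- arXiv:1604.03189 — 2 statements merged into one kernel-verified Lean document; each statement's English description precedes it below -/
import Mathlib

section
/- Suppose φ ∈ C^∞((−1,1)) is real-valued, a ∈ C_0^∞(ℐ) for an open interval ℐ ⊂ (−1,1), 0 < δ < 1/2, and λ ≥ 1. Assume |φ'(t)| ≥ λ^{−1/2+δ} on ℐ, and that for 0 ≤ j ≤ N = ⌈4δ^{−1}⌉ one has |∂_t^j φ'(t)| ≤ λ^{δ/2} and |∂_t^j a(t)| ≤ C_j λ^{j/2} on ℐ. Then |∫ e^{iλφ(t)} a(t) dt| ≤ C λ^{−2}, where C depends only on δ and the constants C_j. -/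
open MeasureTheory Finset

noncomputable def Aseq : ℕ → ℝ
  | 0 => 1
  | (j+1) => ∑ i ∈ (Finset.range (j+1)).attach,
      ((j.choose i.1 : ℝ) * ∑ l ∈ (Finset.range (j - i.1 + 1)).attach,
        (((j - i.1).choose l.1 : ℝ) * Aseq l.1 * Aseq (j - i.1 - l.1)))
  decreasing_by
  all_goals
    (first
      | (have hi := i.2; have hl := l.2; simp only [Finset.mem_range] at hi hl; omega))

lemma Aseq_nonneg (j : ℕ) : 0 ≤ Aseq j := by
  induction j using Nat.strong_induction_on with
  | _ j ih =>
    match j with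
    | 0 => rw [Aseq]; exact zero_le_one
    | (j+1) =>
      rw [Aseq]
      refine Finset.sum_nonneg fun i _ => mul_nonneg (by positivity)
        (Finset.sum_nonneg fun l _ => ?_)
      have hi := i.2; have hl := l.2
      simp only [Finset.mem_range] at hi hl
      have h1 := ih l.1 (by omega)
      have h2 := ih (j - i.1 - l.1) (by omega)
      positivity

lemma Aseq_succ (j : ℕ) : Aseq (j+1) = ∑ i ∈ Finset.range (j+1),
    ((j.choose i : ℝ) * ∑ l ∈ Finset.range (j - i + 1),
      (((j - i).choose l : ℝ) * Aseq l * Aseq (j - i - l))) := by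
  rw [Aseq]
  rw [Finset.sum_attach (Finset.range (j+1)) (fun i => (j.choose i : ℝ) *
    ∑ l ∈ (Finset.range (j - i + 1)).attach,
      (((j - i).choose l.1 : ℝ) * Aseq l.1 * Aseq (j - i - l.1)))]
  refine Finset.sum_congr rfl fun i _ => ?_
  rw [Finset.sum_attach (Finset.range (j - i + 1)) (fun l => ((j - i).choose l : ℝ) *
    Aseq l * Aseq (j - i - l))]

noncomputable def Mseq (c : ℕ → ℝ) : ℕ → ℕ → ℝ
  | 0, j => max (c j) 0
  | (k+1), j => ∑ i ∈ Finset.range (j+2), ((j+1).choose i : ℝ) * Aseq i * Mseq c k (j+1-i)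

lemma Mseq_nonneg (c : ℕ → ℝ) (k j : ℕ) : 0 ≤ Mseq c k j := by
  induction k generalizing j with
  | zero => rw [Mseq]; exact le_max_right _ _
  | succ k ih =>
    rw [Mseq]
    exact Finset.sum_nonneg fun i _ =>
      mul_nonneg (mul_nonneg (by positivity) (Aseq_nonneg i)) (ih _)

lemma iteratedDerivWithin_of_isOpen'' {F : Type*} [NormedAddCommGroup F] [NormedSpace ℝ F]
    {f : ℝ → F} {s : Set ℝ} (hs : IsOpen s) {x : ℝ} (hx : x ∈ s) (n : ℕ) :
    iteratedDerivWithin n f s x = iteratedDeriv n f x := by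
  rw [iteratedDerivWithin_eq_iteratedFDerivWithin, iteratedDeriv_eq_iteratedFDeriv,
    iteratedFDerivWithin_of_isOpen n hs hx]

lemma normIDW_mul_le {u v : ℝ → ℂ} {s : Set ℝ} (hu : ContDiffOn ℝ (⊤ : ℕ∞) u s)
    (hv : ContDiffOn ℝ (⊤ : ℕ∞) v s) (hs : UniqueDiffOn ℝ s) {x : ℝ} (hx : x ∈ s) (n : ℕ) :
    ‖iteratedDerivWithin n (fun y => u y * v y) s x‖ ≤
      ∑ i ∈ Finset.range (n+1), (n.choose i : ℝ) * ‖iteratedDerivWithin i u s x‖ *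
        ‖iteratedDerivWithin (n-i) v s x‖ := by
  have := norm_iteratedFDerivWithin_mul_le (𝕜 := ℝ) (A := ℂ) hu hv hs hx (n := n) (by exact_mod_cast le_top)
  simpa only [norm_iteratedFDerivWithin_eq_norm_iteratedDerivWithin] using this

lemma normIDW_ofReal {u : ℝ → ℝ} {s : Set ℝ} (hu : ContDiffOn ℝ (⊤ : ℕ∞) u s)
    (hs : UniqueDiffOn ℝ s) {x : ℝ} (hx : x ∈ s) (n : ℕ) :
    ‖iteratedDerivWithin n (fun y => (u y : ℂ)) s x‖ = ‖iteratedDerivWithin n u s x‖ := by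
  rw [← norm_iteratedFDerivWithin_eq_norm_iteratedDerivWithin,
    ← norm_iteratedFDerivWithin_eq_norm_iteratedDerivWithin]
  have h : (fun y => ((u y : ℝ) : ℂ)) = (Complex.ofRealLI ∘ u) := rfl
  rw [h, Complex.ofRealLI.norm_iteratedFDerivWithin_comp_left (hu x hx) hs hx (by exact_mod_cast le_top)]

/-- **Stationary phase with lower bounds on the first derivative** (Lemma 4.1 of
Sogge–Xi–Zhang).  If `φ ∈ C^∞((-1,1))` is real valued, `a ∈ C_0^∞(ℐ)` for an open
interval `ℐ = (p,q) ⊂ (-1,1)`, `|φ'| ≥ λ^{-1/2+δ}` on `ℐ`, and for `0 ≤ j ≤ ⌈4/δ⌉`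
one has `|∂_t^j φ'| ≤ λ^{δ/2}` and `|∂_t^j a| ≤ C_j λ^{j/2}` on `ℐ`, then for
`0 < δ < 1/2` the oscillatory integral `I(λ) = ∫ e^{iλφ(t)} a(t) dt` satisfies
`|I(λ)| ≤ C λ^{-2}` with `C` depending only on `δ` and the `C_j`. -/
theorem stationary_phase_first_derivative_bound
    (δ : ℝ) (hδ0 : 0 < δ) (hδ1 : δ < 1 / 2) (Cj : ℕ → ℝ) :
    ∃ C : ℝ, ∀ lam : ℝ, 1 ≤ lam →
      ∀ (φ : ℝ → ℝ) (a : ℝ → ℂ) (p q : ℝ),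
        Set.Ioo p q ⊆ Set.Ioo (-1 : ℝ) 1 →
        ContDiffOn ℝ (⊤ : ℕ∞) φ (Set.Ioo (-1 : ℝ) 1) →
        ContDiff ℝ (⊤ : ℕ∞) a →
        tsupport a ⊆ Set.Ioo p q →
        (∀ t ∈ Set.Ioo p q, lam ^ (-(1 / 2) + δ : ℝ) ≤ |deriv φ t|) →
        (∀ j : ℕ, j ≤ ⌈4 / δ⌉₊ → ∀ t ∈ Set.Ioo p q,
          |iteratedDeriv j (deriv φ) t| ≤ lam ^ (δ / 2 : ℝ)) →
        (∀ j : ℕ, j ≤ ⌈4 / δ⌉₊ → ∀ t ∈ Set.Ioo p q,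
          ‖iteratedDeriv j a t‖ ≤ Cj j * lam ^ ((j : ℝ) / 2)) →
        ‖∫ t : ℝ, Complex.exp (Complex.I * lam * φ t) * a t‖ ≤ C * lam ^ (-2 : ℝ) := by
  classical
  refine ⟨2 * Mseq Cj (⌈4 / δ⌉₊) 0, ?_⟩
  intro lam hlam φ a p q hpq hφ ha hsupp hlow hdφ hda
  set N := ⌈4 / δ⌉₊ with hNdef
  have hlam0 : (0:ℝ) < lam := lt_of_lt_of_le one_pos hlam
  set s : Set ℝ := Set.Ioo p q with hs
  have sOpen : IsOpen s := isOpen_Ioo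
  have sUD : UniqueDiffOn ℝ s := sOpen.uniqueDiffOn
  have s1Open : IsOpen (Set.Ioo (-1:ℝ) 1) := isOpen_Ioo
  set f := deriv φ with hf
  have hfs : ContDiffOn ℝ (⊤ : ℕ∞) f (Set.Ioo (-1:ℝ) 1) := hφ.deriv_of_isOpen s1Open (by simp)
  have hfC : ContDiffOn ℝ (⊤ : ℕ∞) (fun t => (f t : ℂ)) s :=
    Complex.ofRealCLM.contDiff.comp_contDiffOn (hfs.mono hpq)
  have hfne : ∀ t ∈ s, f t ≠ 0 := by
    intro t ht h0
    have h1 := hlow t ht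
    have hp := Real.rpow_pos_of_pos hlam0 (-(1/2) + δ)
    rw [h0] at h1; simp at h1; linarith
  set gC : ℝ → ℂ := fun t => ((f t : ℂ))⁻¹ with hgCdef
  have hgC : ContDiffOn ℝ (⊤ : ℕ∞) gC s := by
    refine hfC.inv fun t ht => ?_
    exact_mod_cast Complex.ofReal_ne_zero.mpr (hfne t ht)
  -- the sequence of amplitudes
  let b : ℕ → ℝ → ℂ := fun k => Nat.rec a (fun _ bk => deriv (fun t => gC t * bk t)) k
  have hb0 : b 0 = a := rfl
  have hbsucc : ∀ k, b (k+1) = deriv (fun t => gC t * b k t) := fun k => rfl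
  -- vanishing outside the support of a
  have hbz : ∀ k, ∀ t, t ∉ tsupport a → b k t = 0 := by
    intro k
    induction k with
    | zero => exact fun t ht => image_eq_zero_of_notMem_tsupport ht
    | succ k ih =>
      intro t ht
      have hev : (fun t => gC t * b k t) =ᶠ[nhds t] (fun _ => (0:ℂ)) := by
        filter_upwards [(isClosed_tsupport a).isOpen_compl.mem_nhds ht] with y hy
        simp [ih y hy]
      rw [hbsucc k, hev.deriv_eq]
      simp
  -- smoothness on s
  have hbs : ∀ k, ContDiffOn ℝ (⊤ : ℕ∞) (b k) s := by
    intro k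
    induction k with
    | zero => exact ha.contDiffOn
    | succ k ih => exact (hgC.mul ih).deriv_of_isOpen sOpen (by simp)
  -- global differentiability of gC * b k
  have hdif : ∀ k t, DifferentiableAt ℝ (fun t => gC t * b k t) t := by
    intro k t
    by_cases ht : t ∈ s
    · exact ((hgC.mul (hbs k)).contDiffAt (sOpen.mem_nhds ht)).differentiableAt
        (by simp)
    · have ht' : t ∉ tsupport a := fun h => ht (hsupp h)
      have hev : (fun t => gC t * b k t) =ᶠ[nhds t] (fun _ => (0:ℂ)) := by
        filter_upwards [(isClosed_tsupport a).isOpen_compl.mem_nhds ht'] with y hy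
        simp [hbz k y hy]
      exact hev.differentiableAt_iff.mpr (differentiableAt_const 0)
  -- compact support machinery
  have hKa : IsCompact (tsupport a) := by
    refine Metric.isCompact_of_isClosed_isBounded (isClosed_tsupport a) ?_
    exact (Metric.isBounded_Ioo (-1:ℝ) 1).subset (hsupp.trans hpq)
  -- global continuity of b k
  have hbc : ∀ k, Continuous (b k) := by
    intro k
    rw [continuous_iff_continuousAt]
    intro t
    by_cases ht : t ∈ s
    · exact ((hbs k).continuousOn.continuousAt (sOpen.mem_nhds ht))
    · have ht' : t ∉ tsupport a := fun h => ht (hsupp h)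
      have hev : b k =ᶠ[nhds t] (fun _ => (0:ℂ)) := by
        filter_upwards [(isClosed_tsupport a).isOpen_compl.mem_nhds ht'] with y hy
        simp [hbz k y hy]
      exact (continuousAt_congr hev).mpr continuousAt_const
  -- the phase factor
  set e : ℝ → ℂ := fun t => Complex.exp (Complex.I * lam * φ t) with hedef
  have hec : ∀ t ∈ s, ContinuousAt e t := by
    intro t ht
    have : ContinuousAt φ t :=
      (hφ.continuousOn.continuousAt (s1Open.mem_nhds (hpq ht)))
    exact (Complex.continuous_exp.continuousAt).comp
      ((continuousAt_const.mul (Complex.continuous_ofReal.continuousAt.comp this)))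
  have hebc : ∀ k, Continuous (fun t => e t * b k t) := by
    intro k
    rw [continuous_iff_continuousAt]
    intro t
    by_cases ht : t ∈ s
    · exact (hec t ht).mul ((hbc k).continuousAt)
    · have ht' : t ∉ tsupport a := fun h => ht (hsupp h)
      have hev : (fun t => e t * b k t) =ᶠ[nhds t] (fun _ => (0:ℂ)) := by
        filter_upwards [(isClosed_tsupport a).isOpen_compl.mem_nhds ht'] with y hy
        simp [hbz k y hy]
      exact (continuousAt_congr hev).mpr continuousAt_const
  have hebsupp : ∀ k, Function.support (fun t => e t * b k t) ⊆ tsupport a := by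
    intro k t ht
    by_contra h
    exact ht (by simp [hbz k t h])
  have hebcs : ∀ k, HasCompactSupport (fun t => e t * b k t) := by
    intro k
    exact hKa.of_isClosed_subset isClosed_closure
      (closure_minimal (hebsupp k) (isClosed_tsupport a))
  have heint : ∀ k, Integrable (fun t => e t * b k t) := fun k =>
    (hebc k).integrable_of_hasCompactSupport (hebcs k)
  -- integration by parts
  have hIBP : ∀ k, ‖∫ t : ℝ, e t * b k t‖ = lam⁻¹ * ‖∫ t : ℝ, e t * b (k+1) t‖ := by
    intro k
    set F : ℝ → ℂ := fun t => e t * (gC t * b k t) with hFdef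
    set D : ℝ → ℂ := fun t => Complex.I * lam * (e t * b k t) + e t * b (k+1) t with hDdef
    have hF : ∀ t, HasDerivAt F (D t) t := by
      intro t
      by_cases ht : t ∈ s
      · have hφd : HasDerivAt φ (f t) t :=
          ((hφ.contDiffAt (s1Open.mem_nhds (hpq ht))).differentiableAt
            (by simp)).hasDerivAt
        have hu : HasDerivAt (fun y : ℝ => Complex.I * lam * (φ y : ℂ))
            (Complex.I * lam * (f t : ℂ)) t := (hφd.ofReal_comp).const_mul _
        have he' : HasDerivAt e
            (Complex.exp (Complex.I * lam * (φ t:ℂ)) * (Complex.I * lam * (f t:ℂ))) t := hu.cexp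
        have hgb : HasDerivAt (fun y => gC y * b k y) (b (k+1) t) t := by
          have h := (hdif k t).hasDerivAt
          rw [hbsucc k]
          exact h
        have hmul := he'.mul hgb
        convert hmul using 1
        · rfl
        · rfl
        have hne : (f t : ℂ) ≠ 0 := Complex.ofReal_ne_zero.mpr (hfne t ht)
        simp only [hDdef, hFdef, hedef, hgCdef]
        field_simp
      · have ht' : t ∉ tsupport a := fun h => ht (hsupp h)
        have hev : F =ᶠ[nhds t] (fun _ => (0:ℂ)) := by
          filter_upwards [(isClosed_tsupport a).isOpen_compl.mem_nhds ht'] with y hy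
          simp [hFdef, hbz k y hy]
        have h0 : HasDerivAt F 0 t := hev.hasDerivAt_iff.mpr (hasDerivAt_const t 0)
        have hD0 : D t = 0 := by simp [hDdef, hbz k t ht', hbz (k+1) t ht']
        rw [hD0]; exact h0
    have hDc : Continuous D :=
      (continuous_const.mul (hebc k)).add (hebc (k+1))
    have hDsupp : Function.support D ⊆ Set.Ioc (-1:ℝ) 1 := by
      intro t ht
      by_contra h
      apply ht
      have ht' : t ∉ tsupport a := by
        intro hmem
        exact h (Set.Ioo_subset_Ioc_self (hpq (hsupp hmem)))
      simp [hDdef, hbz k t ht', hbz (k+1) t ht']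
    have hm1 : (-1:ℝ) ∉ tsupport a := by
      intro h
      have h2 := hpq (hsupp h)
      simp [Set.mem_Ioo] at h2
    have hp1 : (1:ℝ) ∉ tsupport a := by
      intro h
      have h2 := hpq (hsupp h)
      simp [Set.mem_Ioo] at h2
    have hzero : (∫ t : ℝ, D t) = 0 := by
      have h1 : (∫ t in (-1:ℝ)..1, D t) = ∫ t : ℝ, D t :=
        intervalIntegral.integral_eq_integral_of_support_subset hDsupp
      have h2 : (∫ t in (-1:ℝ)..1, D t) = F 1 - F (-1) :=
        intervalIntegral.integral_eq_sub_of_hasDerivAt (fun x _ => hF x)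
          (hDc.intervalIntegrable _ _)
      rw [← h1, h2]
      simp [hFdef, hbz k _ hm1, hbz k _ hp1]
    have hsplit : (∫ t : ℝ, D t)
        = Complex.I * lam * (∫ t : ℝ, e t * b k t) + ∫ t : ℝ, e t * b (k+1) t := by
      simp only [hDdef]
      rw [integral_add ((heint k).const_mul _) (heint (k+1)), integral_const_mul]
    have hIlam : (Complex.I * (lam:ℂ)) ≠ 0 := by
      simp [Complex.I_ne_zero, Complex.ofReal_ne_zero, ne_of_gt hlam0]
    have key : (∫ t : ℝ, e t * b k t)
        = -(Complex.I * lam)⁻¹ * ∫ t : ℝ, e t * b (k+1) t := by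
      have h3 : Complex.I * lam * (∫ t : ℝ, e t * b k t)
          + (∫ t : ℝ, e t * b (k+1) t) = 0 := by
        rw [← hsplit]; exact hzero
      rw [neg_mul, eq_neg_iff_add_eq_zero, ← mul_right_inj' hIlam, mul_add, ← mul_assoc,
        mul_inv_cancel₀ hIlam, one_mul, mul_zero]
      exact h3
    rw [key, norm_mul]
    congr 1
    rw [norm_neg, norm_inv, norm_mul]
    simp [Complex.norm_I, Complex.norm_real, Real.norm_eq_abs, abs_of_pos hlam0]
  -- derivative bounds for gC
  have hcdf' : ContDiffOn ℝ (⊤ : ℕ∞) (fun y => (-(deriv f y) : ℝ)) s :=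
    ((hfs.deriv_of_isOpen s1Open (by simp)).neg).mono hpq
  have hu' : ContDiffOn ℝ (⊤ : ℕ∞) (fun y => ((-(deriv f y) : ℝ) : ℂ)) s :=
    Complex.ofRealCLM.contDiff.comp_contDiffOn hcdf'
  have hgbound : ∀ j, j ≤ N → ∀ t ∈ s, ‖iteratedDerivWithin j gC s t‖
      ≤ Aseq j * lam ^ ((1/2 - δ) + (j:ℝ)*(1/2 - δ/2) : ℝ) := by
    intro j
    induction j using Nat.strong_induction_on with
    | _ j ih =>
      match j, ih with
      | 0, _ =>
        intro _ t ht
        simp only [iteratedDerivWithin_zero]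
        have h1 : ‖gC t‖ = |f t|⁻¹ := by
          simp [hgCdef, Real.norm_eq_abs]
        have h2 : (0:ℝ) < lam ^ (-(1/2) + δ : ℝ) := Real.rpow_pos_of_pos hlam0 _
        have h3 : |f t|⁻¹ ≤ (lam ^ (-(1/2) + δ : ℝ))⁻¹ := by
          exact inv_anti₀ h2 (hlow t ht)
        have h4 : (lam ^ (-(1/2) + δ : ℝ))⁻¹ = lam ^ ((1/2 - δ) : ℝ) := by
          rw [← Real.rpow_neg hlam0.le]
          congr 1
          ring
        have h5 : Aseq 0 * lam ^ ((1/2 - δ) + ((0:ℕ):ℝ)*(1/2 - δ/2) : ℝ)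
            = lam ^ ((1/2 - δ) : ℝ) := by
          rw [Aseq]; push_cast; ring_nf
        rw [h1, h5, ← h4]
        exact h3
      | (j+1), ih =>
        intro hjN t ht
        have hjN' : j + 1 ≤ N := hjN
        set c : ℝ := 1/2 - δ/2 with hcdef
        have hc0 : 0 ≤ c := by rw [hcdef]; linarith
        set v : ℝ → ℂ := fun y => gC y * gC y with hvdef
        set u : ℝ → ℂ := fun y => ((-(deriv f y) : ℝ) : ℂ) with hudef
        have heq : iteratedDerivWithin (j+1) gC s t
            = iteratedDerivWithin j (fun y => u y * v y) s t := by
          rw [iteratedDerivWithin_succ']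
          refine iteratedDerivWithin_congr ?_ ht
          intro y hy
          rw [derivWithin_of_isOpen sOpen hy]
          have hfd : HasDerivAt f (deriv f y) y :=
            ((hfs.contDiffAt (s1Open.mem_nhds (hpq hy))).differentiableAt
              (by simp)).hasDerivAt
          have hfCd : HasDerivAt (fun y => ((f y : ℝ) : ℂ)) (Complex.ofReal (deriv f y)) y :=
            hfd.ofReal_comp
          have hne : ((f y : ℝ) : ℂ) ≠ 0 := Complex.ofReal_ne_zero.mpr (hfne y hy)
          have hinv : HasDerivAt gC (-(((f y : ℂ)) ^ 2)⁻¹ * (Complex.ofReal (deriv f y))) y := by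
            exact (hasDerivAt_inv hne).comp y hfCd
          rw [hinv.deriv]
          simp only [hudef, hvdef, hgCdef]
          push_cast
          rw [sq, mul_inv]
          ring
        rw [heq]
        calc ‖iteratedDerivWithin j (fun y => u y * v y) s t‖
            ≤ ∑ i ∈ Finset.range (j+1), (j.choose i : ℝ) *
                ‖iteratedDerivWithin i u s t‖ * ‖iteratedDerivWithin (j-i) v s t‖ :=
              normIDW_mul_le hu' (hgC.mul hgC) sUD ht j
          _ ≤ ∑ i ∈ Finset.range (j+1), ((j.choose i : ℝ) *
                ∑ l ∈ Finset.range (j - i + 1), (((j - i).choose l : ℝ) * Aseq l *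
                  Aseq (j - i - l))) * lam ^ ((1/2 - δ) + ((j+1:ℕ):ℝ)*c : ℝ) := by
              refine Finset.sum_le_sum fun i hi => ?_
              rw [Finset.mem_range, Nat.lt_succ_iff] at hi
              set m := j - i with hmdef
              -- bound on the derivative of u
              have hu_i : ‖iteratedDerivWithin i u s t‖ ≤ lam ^ (δ/2 : ℝ) := by
                have h1 : ‖iteratedDerivWithin i u s t‖ = |iteratedDeriv (i+1) f t| := by
                  rw [hudef, normIDW_ofReal hcdf' sUD ht,
                    iteratedDerivWithin_fun_neg (deriv f), norm_neg,
                    iteratedDerivWithin_of_isOpen'' sOpen ht, Real.norm_eq_abs,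
                    ← iteratedDeriv_succ']
                rw [h1]
                exact hdφ (i+1) (by omega) t ht
              -- bound on the derivative of v
              have hv_m : ‖iteratedDerivWithin m v s t‖
                  ≤ (∑ l ∈ Finset.range (m + 1), ((m.choose l : ℝ) * Aseq l * Aseq (m - l)))
                    * lam ^ (2*(1/2 - δ) + (m:ℝ)*c : ℝ) := by
                refine (normIDW_mul_le hgC hgC sUD ht m).trans ?_
                rw [Finset.sum_mul]
                refine Finset.sum_le_sum fun l hl => ?_
                rw [Finset.mem_range, Nat.lt_succ_iff] at hl
                have hA1 : ‖iteratedDerivWithin l gC s t‖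
                    ≤ Aseq l * lam ^ ((1/2 - δ) + (l:ℝ)*c : ℝ) :=
                  ih l (by omega) (by omega) t ht
                have hA2 : ‖iteratedDerivWithin (m-l) gC s t‖
                    ≤ Aseq (m-l) * lam ^ ((1/2 - δ) + ((m-l:ℕ):ℝ)*c : ℝ) :=
                  ih (m-l) (by omega) (by omega) t ht
                have hAn1 := Aseq_nonneg l
                have hAn2 := Aseq_nonneg (m-l)
                have hcast : ((m - l : ℕ):ℝ) = (m:ℝ) - l := Nat.cast_sub hl
                have hexp : ((1/2 - δ) + (l:ℝ)*c) + ((1/2 - δ) + ((m-l:ℕ):ℝ)*c)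
                    = 2*(1/2 - δ) + (m:ℝ)*c := by rw [hcast]; ring
                calc (m.choose l : ℝ) * ‖iteratedDerivWithin l gC s t‖ *
                      ‖iteratedDerivWithin (m-l) gC s t‖
                    ≤ (m.choose l : ℝ) * (Aseq l * lam ^ ((1/2 - δ) + (l:ℝ)*c : ℝ)) *
                      (Aseq (m-l) * lam ^ ((1/2 - δ) + ((m-l:ℕ):ℝ)*c : ℝ)) := by
                      have hch : (0:ℝ) ≤ (m.choose l : ℝ) := by positivity
                      refine mul_le_mul (mul_le_mul_of_nonneg_left hA1 hch) hA2
                        (norm_nonneg _) (by positivity)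
                  _ = (m.choose l : ℝ) * Aseq l * Aseq (m-l) *
                      (lam ^ ((1/2 - δ) + (l:ℝ)*c : ℝ) *
                        lam ^ ((1/2 - δ) + ((m-l:ℕ):ℝ)*c : ℝ)) := by ring
                  _ = (m.choose l : ℝ) * Aseq l * Aseq (m-l) *
                      lam ^ (2*(1/2 - δ) + (m:ℝ)*c : ℝ) := by
                      rw [← Real.rpow_add hlam0, hexp]
              have hS0 : (0:ℝ) ≤ ∑ l ∈ Finset.range (m + 1),
                  ((m.choose l : ℝ) * Aseq l * Aseq (m - l)) := by
                refine Finset.sum_nonneg fun l _ => ?_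
                have := Aseq_nonneg l; have := Aseq_nonneg (m-l); positivity
              have hch : (0:ℝ) ≤ (j.choose i : ℝ) := by positivity
              have hmj : (m:ℝ) ≤ (j:ℝ) := by
                exact_mod_cast Nat.sub_le j i
              have hrpow : lam ^ (δ/2 : ℝ) * lam ^ (2*(1/2 - δ) + (m:ℝ)*c : ℝ)
                  ≤ lam ^ ((1/2 - δ) + ((j+1:ℕ):ℝ)*c : ℝ) := by
                rw [← Real.rpow_add hlam0]
                refine Real.rpow_le_rpow_of_exponent_le hlam ?_
                have hmc : (m:ℝ)*c ≤ (j:ℝ)*c := mul_le_mul_of_nonneg_right hmj hc0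
                push_cast
                rw [hcdef] at hmc ⊢
                linarith
              have hmm : m = j - i := hmdef
              calc (j.choose i : ℝ) * ‖iteratedDerivWithin i u s t‖ *
                    ‖iteratedDerivWithin (j-i) v s t‖
                  ≤ (j.choose i : ℝ) * lam ^ (δ/2 : ℝ) *
                    ((∑ l ∈ Finset.range (m + 1), ((m.choose l : ℝ) * Aseq l * Aseq (m - l)))
                      * lam ^ (2*(1/2 - δ) + (m:ℝ)*c : ℝ)) := by
                    rw [← hmm]
                    refine mul_le_mul (mul_le_mul_of_nonneg_left hu_i hch) hv_m
                      (norm_nonneg _) (by positivity)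
                _ = ((j.choose i : ℝ) *
                      ∑ l ∈ Finset.range (m + 1), ((m.choose l : ℝ) * Aseq l * Aseq (m - l))) *
                    (lam ^ (δ/2 : ℝ) * lam ^ (2*(1/2 - δ) + (m:ℝ)*c : ℝ)) := by ring
                _ ≤ ((j.choose i : ℝ) *
                      ∑ l ∈ Finset.range (m + 1), ((m.choose l : ℝ) * Aseq l * Aseq (m - l))) *
                    lam ^ ((1/2 - δ) + ((j+1:ℕ):ℝ)*c : ℝ) := by
                    refine mul_le_mul_of_nonneg_left hrpow (by positivity)
                _ = ((j.choose i : ℝ) *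
                      ∑ l ∈ Finset.range (j - i + 1), (((j-i).choose l : ℝ) * Aseq l *
                        Aseq (j - i - l))) * lam ^ ((1/2 - δ) + ((j+1:ℕ):ℝ)*c : ℝ) := by
                    rw [← hmm]
          _ = Aseq (j+1) * lam ^ ((1/2 - δ) + ((j+1:ℕ):ℝ)*c : ℝ) := by
              rw [Aseq_succ, Finset.sum_mul]
  -- derivative bounds for b k
  have hbbound : ∀ k j, k + j ≤ N → ∀ t ∈ s, ‖iteratedDerivWithin j (b k) s t‖
      ≤ Mseq Cj k j * lam ^ ((k:ℝ)*(1-δ) + (j:ℝ)/2 : ℝ) := by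
    intro k
    induction k with
    | zero =>
      intro j hj t ht
      rw [iteratedDerivWithin_of_isOpen'' sOpen ht, hb0]
      have h1 := hda j (by omega) t ht
      have h2 : Cj j * lam ^ ((j:ℝ)/2) ≤ max (Cj j) 0 * lam ^ ((j:ℝ)/2) :=
        mul_le_mul_of_nonneg_right (le_max_left _ _) (Real.rpow_nonneg hlam0.le _)
      have h3 : ((0:ℕ):ℝ)*(1-δ) + (j:ℝ)/2 = (j:ℝ)/2 := by norm_num
      rw [Mseq, h3]
      exact h1.trans h2
    | succ k ih =>
      intro j hj t ht
      have h1 : Set.EqOn (b (k+1)) (derivWithin (fun y => gC y * b k y) s) s := by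
        intro y hy
        rw [derivWithin_of_isOpen sOpen hy, hbsucc k]
      rw [iteratedDerivWithin_congr h1 ht, ← iteratedDerivWithin_succ']
      set c : ℝ := 1/2 - δ/2 with hcdef
      calc ‖iteratedDerivWithin (j+1) (fun y => gC y * b k y) s t‖
          ≤ ∑ i ∈ Finset.range (j+2), ((j+1).choose i : ℝ) *
              ‖iteratedDerivWithin i gC s t‖ * ‖iteratedDerivWithin (j+1-i) (b k) s t‖ :=
            normIDW_mul_le hgC (hbs k) sUD ht (j+1)
        _ ≤ ∑ i ∈ Finset.range (j+2), ((j+1).choose i : ℝ) * Aseq i * Mseq Cj k (j+1-i) *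
              lam ^ (((k+1:ℕ):ℝ)*(1-δ) + (j:ℝ)/2 : ℝ) := by
            refine Finset.sum_le_sum fun i hi => ?_
            rw [Finset.mem_range, Nat.lt_succ_iff] at hi
            have hg_i : ‖iteratedDerivWithin i gC s t‖
                ≤ Aseq i * lam ^ ((1/2 - δ) + (i:ℝ)*(1/2 - δ/2) : ℝ) :=
              hgbound i (by omega) t ht
            have hb_i : ‖iteratedDerivWithin (j+1-i) (b k) s t‖
                ≤ Mseq Cj k (j+1-i) * lam ^ ((k:ℝ)*(1-δ) + ((j+1-i:ℕ):ℝ)/2 : ℝ) :=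
              ih (j+1-i) (by omega) t ht
            have hAn : 0 ≤ Aseq i := Aseq_nonneg i
            have hMn : 0 ≤ Mseq Cj k (j+1-i) := Mseq_nonneg Cj k (j+1-i)
            have hch : (0:ℝ) ≤ ((j+1).choose i : ℝ) := by positivity
            have hcast : ((j+1-i:ℕ):ℝ) = (j:ℝ) + 1 - i := by
              rw [Nat.cast_sub hi]; push_cast; ring
            have hexp : ((1/2 - δ) + (i:ℝ)*(1/2 - δ/2)) + ((k:ℝ)*(1-δ) + ((j+1-i:ℕ):ℝ)/2)
                ≤ ((k+1:ℕ):ℝ)*(1-δ) + (j:ℝ)/2 := by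
              rw [hcast]
              push_cast
              have hi0 : (0:ℝ) ≤ (i:ℝ) := Nat.cast_nonneg i
              nlinarith [mul_nonneg hi0 hδ0.le]
            calc ((j+1).choose i : ℝ) * ‖iteratedDerivWithin i gC s t‖ *
                  ‖iteratedDerivWithin (j+1-i) (b k) s t‖
                ≤ ((j+1).choose i : ℝ) * (Aseq i * lam ^ ((1/2 - δ) + (i:ℝ)*(1/2 - δ/2) : ℝ)) *
                  (Mseq Cj k (j+1-i) * lam ^ ((k:ℝ)*(1-δ) + ((j+1-i:ℕ):ℝ)/2 : ℝ)) :=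
                  mul_le_mul (mul_le_mul_of_nonneg_left hg_i hch) hb_i
                    (norm_nonneg _) (by positivity)
              _ = ((j+1).choose i : ℝ) * Aseq i * Mseq Cj k (j+1-i) *
                  (lam ^ ((1/2 - δ) + (i:ℝ)*(1/2 - δ/2) : ℝ) *
                    lam ^ ((k:ℝ)*(1-δ) + ((j+1-i:ℕ):ℝ)/2 : ℝ)) := by ring
              _ ≤ ((j+1).choose i : ℝ) * Aseq i * Mseq Cj k (j+1-i) *
                  lam ^ (((k+1:ℕ):ℝ)*(1-δ) + (j:ℝ)/2 : ℝ) := by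
                  refine mul_le_mul_of_nonneg_left ?_ (by positivity)
                  rw [← Real.rpow_add hlam0]
                  exact Real.rpow_le_rpow_of_exponent_le hlam hexp
        _ = Mseq Cj (k+1) j * lam ^ (((k+1:ℕ):ℝ)*(1-δ) + (j:ℝ)/2 : ℝ) := by
            rw [Mseq, Finset.sum_mul]
  -- chain of integrations by parts
  have hchain : ∀ k, ‖∫ t : ℝ, e t * b 0 t‖ = (lam⁻¹)^k * ‖∫ t : ℝ, e t * b k t‖ := by
    intro k
    induction k with
    | zero => simp
    | succ k ih => rw [ih, hIBP k, pow_succ]; ring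
  have hMN : 0 ≤ Mseq Cj N 0 := Mseq_nonneg Cj N 0
  have hbNbound : ∀ t ∈ Set.Ioo (-1:ℝ) 1, ‖e t * b N t‖
      ≤ Mseq Cj N 0 * lam ^ ((N:ℝ)*(1-δ) : ℝ) := by
    intro t ht
    by_cases hts : t ∈ s
    · have h1 := hbbound N 0 (by omega) t hts
      rw [iteratedDerivWithin_zero] at h1
      have he1 : ‖e t‖ = 1 := by
        rw [hedef]
        rw [Complex.norm_exp]
        simp [Complex.mul_re]
      rw [norm_mul, he1, one_mul]
      calc ‖b N t‖ ≤ Mseq Cj N 0 * lam ^ ((N:ℝ)*(1-δ) + ((0:ℕ):ℝ)/2 : ℝ) := h1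
        _ = Mseq Cj N 0 * lam ^ ((N:ℝ)*(1-δ) : ℝ) := by norm_num
    · have ht' : t ∉ tsupport a := fun h => hts (hsupp h)
      rw [hbz N t ht', mul_zero, norm_zero]
      positivity
  have hIntEq : (∫ t in Set.Ioo (-1:ℝ) 1, e t * b N t) = ∫ t : ℝ, e t * b N t := by
    refine setIntegral_eq_integral_of_forall_compl_eq_zero fun t ht => ?_
    have ht' : t ∉ tsupport a := fun h => ht (hpq (hsupp h))
    rw [hbz N t ht', mul_zero]
  have hnorm2 : ‖∫ t : ℝ, e t * b N t‖ ≤ Mseq Cj N 0 * lam ^ ((N:ℝ)*(1-δ) : ℝ) * 2 := by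
    rw [← hIntEq]
    have h2 := norm_setIntegral_le_of_norm_le_const (μ := volume) (s := Set.Ioo (-1:ℝ) 1)
      (f := fun t => e t * b N t) (by rw [Real.volume_Ioo]; exact ENNReal.ofReal_lt_top)
      hbNbound
    have hvol : (volume (Set.Ioo (-1:ℝ) 1)).toReal = 2 := by
      rw [Real.volume_Ioo]
      rw [ENNReal.toReal_ofReal (by norm_num)]
      norm_num
    rw [measureReal_def, hvol] at h2
    exact h2
  have hfinal := hchain N
  rw [hb0] at hfinal
  rw [hfinal]
  have hpow : (lam⁻¹)^N = lam ^ (-(N:ℝ) : ℝ) := by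
    rw [inv_pow, ← Real.rpow_natCast lam N, ← Real.rpow_neg hlam0.le]
  have hNδ : (4:ℝ) ≤ (N:ℝ) * δ := by
    have h4 : (4/δ : ℝ) ≤ (N:ℝ) := by
      rw [hNdef]
      exact Nat.le_ceil _
    calc (4:ℝ) = (4/δ) * δ := by field_simp
      _ ≤ (N:ℝ) * δ := mul_le_mul_of_nonneg_right h4 hδ0.le
  calc (lam⁻¹)^N * ‖∫ t : ℝ, e t * b N t‖
      ≤ (lam⁻¹)^N * (Mseq Cj N 0 * lam ^ ((N:ℝ)*(1-δ) : ℝ) * 2) := by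
        refine mul_le_mul_of_nonneg_left hnorm2 (by positivity)
    _ = 2 * Mseq Cj N 0 * (lam ^ (-(N:ℝ) : ℝ) * lam ^ ((N:ℝ)*(1-δ) : ℝ)) := by
        rw [hpow]; ring
    _ = 2 * Mseq Cj N 0 * lam ^ (-(N:ℝ) + (N:ℝ)*(1-δ) : ℝ) := by
        rw [← Real.rpow_add hlam0]
    _ ≤ 2 * Mseq Cj N 0 * lam ^ (-2 : ℝ) := by
        refine mul_le_mul_of_nonneg_left ?_ (by positivity)
        refine Real.rpow_le_rpow_of_exponent_le hlam ?_
        nlinarith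
end

section
/- Let J(λ) = ∫ e^{iλφ(t)} b(t) dt, λ ≥ 1, where b ∈ C_0^∞(ℐ) for an open interval ℐ ⊂ (−1,1) containing 0, and φ ∈ C^∞((−1,1)) is real-valued. Suppose |φ'(0)| ≤ λ^{−1/2+δ}, λ^{−δ/2} ≤ |φ''(t)| ≤ λ^{δ/2} for t ∈ ℐ, |b| ≤ 1, and |b'| ≤ λ^{1/2}. Then if 0 < δ ≤ 1/4 there is a constant C = C_δ so that |J(λ)| ≤ C λ^{−1/2+2δ}. -/
open MeasureTheory

open Set intervalIntegral


lemma norm_exp_I_mul (lam x : ℝ) : ‖Complex.exp (Complex.I * lam * x)‖ = 1 := by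
  rw [Complex.norm_exp]
  simp [Complex.mul_re]

lemma tail_bound (lam κ B B' a c : ℝ) (ψ ψ' ψ'' : ℝ → ℝ) (f f' : ℝ → ℂ)
    (hlam : 0 < lam) (hκ : 0 < κ) (ha : 0 < a) (hac : a ≤ c)
    (hd1 : ∀ t ∈ Set.Icc a c, HasDerivAt ψ (ψ' t) t)
    (hd2 : ∀ t ∈ Set.Icc a c, HasDerivAt ψ' (ψ'' t) t)
    (hc2 : ContinuousOn ψ'' (Set.Icc a c))
    (hlow : ∀ t ∈ Set.Icc a c, κ * t ≤ ψ' t)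
    (hpos : ∀ t ∈ Set.Icc a c, 0 ≤ ψ'' t)
    (hfd : ∀ t ∈ Set.Icc a c, HasDerivAt f (f' t) t)
    (hfc : ContinuousOn f' (Set.Icc a c))
    (hB : ∀ t ∈ Set.Icc a c, ‖f t‖ ≤ B)
    (hB' : ∀ t ∈ Set.Icc a c, ‖f' t‖ ≤ B') :
    ‖∫ t in a..c, Complex.exp (Complex.I * lam * ψ t) * f t‖
      ≤ (1/lam) * (3*B/(κ*a) + (B'/κ) * Real.log (c/a)) := by
  have huIcc : Set.uIcc a c = Set.Icc a c := Set.uIcc_of_le hac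
  have haIcc : a ∈ Set.Icc a c := ⟨le_refl a, hac⟩
  have hcIcc : c ∈ Set.Icc a c := ⟨hac, le_refl c⟩
  have hB0 : 0 ≤ B := le_trans (norm_nonneg _) (hB a haIcc)
  have hB'0 : 0 ≤ B' := le_trans (norm_nonneg _) (hB' a haIcc)
  have hψ'pos : ∀ t ∈ Set.Icc a c, 0 < ψ' t := fun t ht =>
    lt_of_lt_of_le (mul_pos hκ (lt_of_lt_of_le ha ht.1)) (hlow t ht)
  -- continuity facts
  have hψc : ContinuousOn ψ (Set.Icc a c) := fun t ht => ((hd1 t ht).continuousAt).continuousWithinAt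
  have hψ'c : ContinuousOn ψ' (Set.Icc a c) := fun t ht => ((hd2 t ht).continuousAt).continuousWithinAt
  have hfcont : ContinuousOn f (Set.Icc a c) := fun t ht => ((hfd t ht).continuousAt).continuousWithinAt
  set u : ℝ → ℂ := fun t => Complex.exp (Complex.I * lam * ψ t) with hu
  set g : ℝ → ℂ := fun t => Complex.I * lam * ψ' t with hg
  have hgne : ∀ t ∈ Set.Icc a c, g t ≠ 0 := by
    intro t ht
    simp only [hg, mul_ne_zero_iff]
    exact ⟨⟨Complex.I_ne_zero, by exact_mod_cast hlam.ne'⟩,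
      by exact_mod_cast (hψ'pos t ht).ne'⟩
  set v : ℝ → ℂ := fun t => f t / g t with hv
  set u' : ℝ → ℂ := fun t => Complex.exp (Complex.I * lam * ψ t) * (Complex.I * lam * ψ' t)
    with hu'
  set v' : ℝ → ℂ := fun t =>
    (f' t * g t - f t * (Complex.I * lam * ψ'' t)) / g t ^ 2 with hv'
  have hud : ∀ t ∈ Set.Icc a c, HasDerivAt u (u' t) t := by
    intro t ht
    have h1 : HasDerivAt (fun s : ℝ => Complex.I * lam * (ψ s : ℂ))
        (Complex.I * lam * ψ' t) t := ((hd1 t ht).ofReal_comp).const_mul _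
    exact h1.cexp
  have hvd : ∀ t ∈ Set.Icc a c, HasDerivAt v (v' t) t := by
    intro t ht
    have hgd : HasDerivAt g (Complex.I * lam * ψ'' t) t := ((hd2 t ht).ofReal_comp).const_mul _
    exact (hfd t ht).div hgd (hgne t ht)
  -- continuity on Icc of u', v', g etc.
  have hucont : ContinuousOn u (Set.Icc a c) :=
    (Complex.continuous_exp.comp_continuousOn
      ((continuous_const.continuousOn.mul (Complex.continuous_ofReal.comp_continuousOn hψc))))
  have hgcont : ContinuousOn g (Set.Icc a c) :=
    continuous_const.continuousOn.mul (Complex.continuous_ofReal.comp_continuousOn hψ'c)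
  have hu'cont : ContinuousOn u' (Set.Icc a c) := hucont.mul hgcont
  have hvcont : ContinuousOn v (Set.Icc a c) := hfcont.div hgcont hgne
  have hv'cont : ContinuousOn v' (Set.Icc a c) := by
    apply ContinuousOn.div
    · exact (hfc.mul hgcont).sub (hfcont.mul
        (continuous_const.continuousOn.mul (Complex.continuous_ofReal.comp_continuousOn hc2)))
    · exact hgcont.pow 2
    · intro t ht; exact pow_ne_zero 2 (hgne t ht)
  have hu'int : IntervalIntegrable u' volume a c :=
    (hu'cont.mono (by rw [huIcc])).intervalIntegrable
  have hv'int : IntervalIntegrable v' volume a c :=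
    (hv'cont.mono (by rw [huIcc])).intervalIntegrable
  have hibp : ∫ t in a..c, (u' t * v t + u t * v' t)
      = u c * v c - u a * v a := by
    apply integral_deriv_mul_eq_sub (fun t ht => hud t (huIcc ▸ ht))
      (fun t ht => hvd t (huIcc ▸ ht)) hu'int hv'int
  have hu'vint : IntervalIntegrable (fun t => u' t * v t) volume a c :=
    ((hu'cont.mul hvcont).mono (by rw [huIcc])).intervalIntegrable
  have huv'int : IntervalIntegrable (fun t => u t * v' t) volume a c :=
    ((hucont.mul hv'cont).mono (by rw [huIcc])).intervalIntegrable
  have hsplit : ∫ t in a..c, (u' t * v t + u t * v' t)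
      = (∫ t in a..c, u' t * v t) + ∫ t in a..c, u t * v' t :=
    integral_add hu'vint huv'int
  have hmain : ∀ t ∈ Set.Icc a c, u' t * v t = Complex.exp (Complex.I * lam * ψ t) * f t := by
    intro t ht
    have h := hgne t ht
    show (u t * g t) * (f t / g t) = u t * f t
    rw [mul_assoc]
    congr 1
    field_simp
  have heq : ∫ t in a..c, Complex.exp (Complex.I * lam * ψ t) * f t
      = (u c * v c - u a * v a) - ∫ t in a..c, u t * v' t := by
    rw [← hibp, hsplit]
    have : ∫ t in a..c, u' t * v t = ∫ t in a..c, Complex.exp (Complex.I * lam * ψ t) * f t := by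
      apply integral_congr
      intro t ht
      exact hmain t (huIcc ▸ ht)
    rw [this]; ring
  -- norms
  have hub : ∀ t : ℝ, ‖u t‖ = 1 := fun t => norm_exp_I_mul lam (ψ t)
  have hgnorm : ∀ t ∈ Set.Icc a c, ‖g t‖ = lam * ψ' t := by
    intro t ht
    simp only [hg, norm_mul, Complex.norm_I, Complex.norm_real, Real.norm_eq_abs, one_mul]
    rw [abs_of_pos hlam, abs_of_pos (hψ'pos t ht)]
  have hκa : 0 < κ * a := mul_pos hκ ha
  have hvb : ∀ t ∈ Set.Icc a c, ‖v t‖ ≤ B / (lam * (κ * a)) := by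
    intro t ht
    simp only [hv, norm_div]
    rw [hgnorm t ht]
    apply div_le_div₀ hB0 (hB t ht) (mul_pos hlam hκa)
    have h1 : κ * a ≤ κ * t := mul_le_mul_of_nonneg_left ht.1 hκ.le
    nlinarith only [h1, hlow t ht, hlam, hlam.le]
  set G : ℝ → ℝ := fun t => B'/lam * (ψ' t)⁻¹ + B/lam * (ψ'' t / (ψ' t)^2) with hG
  have hptwise : ∀ t ∈ Set.Icc a c, ‖u t * v' t‖ ≤ G t := by
    intro t ht
    have hψt := hψ'pos t ht
    rw [norm_mul, hub t, one_mul]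
    simp only [hv', norm_div, norm_pow]
    rw [hgnorm t ht]
    have hnum : ‖f' t * g t - f t * (Complex.I * lam * ψ'' t)‖
        ≤ B' * (lam * ψ' t) + B * (lam * ψ'' t) := by
      refine (norm_sub_le _ _).trans ?_
      have e1 : ‖f' t * g t‖ ≤ B' * (lam * ψ' t) := by
        rw [norm_mul, hgnorm t ht]
        exact mul_le_mul_of_nonneg_right (hB' t ht) (by positivity)
      have e2 : ‖f t * (Complex.I * lam * ψ'' t)‖ ≤ B * (lam * ψ'' t) := by
        rw [norm_mul]
        have : ‖(Complex.I * lam * ψ'' t : ℂ)‖ = lam * ψ'' t := by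
          simp only [norm_mul, Complex.norm_I, Complex.norm_real, Real.norm_eq_abs, one_mul]
          rw [abs_of_pos hlam, abs_of_nonneg (hpos t ht)]
        rw [this]
        exact mul_le_mul (hB t ht) le_rfl (mul_nonneg hlam.le (hpos t ht)) hB0
      exact add_le_add e1 e2
    calc ‖f' t * g t - f t * (Complex.I * lam * ψ'' t)‖ / (lam * ψ' t) ^ 2
        ≤ (B' * (lam * ψ' t) + B * (lam * ψ'' t)) / (lam * ψ' t) ^ 2 := by gcongr
      _ = G t := by
          simp only [hG]
          field_simp
  have hGcont : ContinuousOn G (Set.Icc a c) := by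
    apply ContinuousOn.add
    · exact continuous_const.continuousOn.mul
        (hψ'c.inv₀ (fun t ht => (hψ'pos t ht).ne'))
    · exact continuous_const.continuousOn.mul
        (hc2.div (hψ'c.pow 2) (fun t ht => pow_ne_zero 2 (hψ'pos t ht).ne'))
  have hGint : IntervalIntegrable G volume a c :=
    (hGcont.mono (by rw [huIcc])).intervalIntegrable
  have huv'normint : IntervalIntegrable (fun t => ‖u t * v' t‖) volume a c :=
    (((hucont.mul hv'cont).norm).mono (by rw [huIcc])).intervalIntegrable
  have hIbound : ‖∫ t in a..c, u t * v' t‖ ≤ ∫ t in a..c, G t := by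
    refine (intervalIntegral.norm_integral_le_integral_norm hac).trans ?_
    apply intervalIntegral.integral_mono_on hac huv'normint hGint
    exact hptwise
  -- compute/bound ∫ G
  have hψ'int : IntervalIntegrable (fun t => (ψ' t)⁻¹) volume a c :=
    ((hψ'c.inv₀ (fun t ht => (hψ'pos t ht).ne')).mono (by rw [huIcc])).intervalIntegrable
  have hratint : IntervalIntegrable (fun t => ψ'' t / (ψ' t)^2) volume a c :=
    ((hc2.div (hψ'c.pow 2) (fun t ht => pow_ne_zero 2 (hψ'pos t ht).ne')).mono (by rw [huIcc])).intervalIntegrable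
  have hGsplit : ∫ t in a..c, G t
      = B'/lam * (∫ t in a..c, (ψ' t)⁻¹) + B/lam * ∫ t in a..c, ψ'' t / (ψ' t)^2 := by
    rw [integral_add (hψ'int.const_mul _) (hratint.const_mul _),
      intervalIntegral.integral_const_mul, intervalIntegral.integral_const_mul]
  have hinv1 : ∫ t in a..c, (ψ' t)⁻¹ ≤ κ⁻¹ * Real.log (c/a) := by
    have h0 : (0:ℝ) ∉ Set.uIcc a c := by
      rw [huIcc]; intro h; exact absurd h.1 (not_le.mpr ha)
    have hιint : IntervalIntegrable (fun t => κ⁻¹ * t⁻¹) volume a c := by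
      apply ContinuousOn.intervalIntegrable
      apply continuous_const.continuousOn.mul
      apply ContinuousOn.inv₀ continuousOn_id
      intro t ht
      rw [huIcc] at ht
      exact (lt_of_lt_of_le ha ht.1).ne'
    have hmono : ∫ t in a..c, (ψ' t)⁻¹ ≤ ∫ t in a..c, κ⁻¹ * t⁻¹ := by
      apply intervalIntegral.integral_mono_on hac hψ'int hιint
      intro t ht
      have htpos : 0 < t := lt_of_lt_of_le ha ht.1
      rw [← mul_inv]
      exact inv_anti₀ (by positivity) (hlow t ht)
    calc ∫ t in a..c, (ψ' t)⁻¹ ≤ ∫ t in a..c, κ⁻¹ * t⁻¹ := hmono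
      _ = κ⁻¹ * ∫ t in a..c, t⁻¹ := integral_const_mul _ _
      _ = κ⁻¹ * Real.log (c/a) := by rw [integral_inv h0]
  have hinv2 : ∫ t in a..c, ψ'' t / (ψ' t)^2 ≤ (κ * a)⁻¹ := by
    have hftc : ∫ t in a..c, ψ'' t / (ψ' t)^2 = -(ψ' c)⁻¹ - -(ψ' a)⁻¹ := by
      apply intervalIntegral.integral_eq_sub_of_hasDerivAt
      · intro t ht
        rw [huIcc] at ht
        have hne := (hψ'pos t ht).ne'
        rw [show ψ'' t / ψ' t ^ 2 = -(-ψ'' t / ψ' t ^ 2) by ring]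
        exact ((hd2 t ht).inv hne).neg
      · exact hratint
    rw [hftc]
    have h1 : (0:ℝ) < (ψ' c)⁻¹ := inv_pos.mpr (hψ'pos c hcIcc)
    have h2 : (ψ' a)⁻¹ ≤ (κ * a)⁻¹ := by
      apply inv_anti₀ hκa
      simpa using hlow a haIcc
    linarith
  -- put everything together
  rw [heq]
  have hfinal : ‖u c * v c - u a * v a - ∫ t in a..c, u t * v' t‖
      ≤ B / (lam * (κ * a)) + B / (lam * (κ * a))
        + (B'/lam * (κ⁻¹ * Real.log (c/a)) + B/lam * (κ * a)⁻¹) := by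
    refine (norm_sub_le _ _).trans ?_
    refine add_le_add ((norm_sub_le _ _).trans (add_le_add ?_ ?_)) ?_
    · rw [norm_mul, hub c, one_mul]; exact hvb c hcIcc
    · rw [norm_mul, hub a, one_mul]; exact hvb a haIcc
    · refine hIbound.trans ?_
      rw [hGsplit]
      have hb1 : B'/lam * (∫ t in a..c, (ψ' t)⁻¹) ≤ B'/lam * (κ⁻¹ * Real.log (c/a)) :=
        mul_le_mul_of_nonneg_left hinv1 (by positivity)
      have hb2 : B/lam * (∫ t in a..c, ψ'' t / (ψ' t)^2) ≤ B/lam * (κ * a)⁻¹ :=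
        mul_le_mul_of_nonneg_left hinv2 (by positivity)
      exact add_le_add hb1 hb2
  refine hfinal.trans (le_of_eq ?_)
  field_simp
  ring


set_option maxHeartbeats 1000000 in
lemma key (δ : ℝ) (hδ0 : 0 < δ) (hδ1 : δ ≤ 1 / 4) (lam : ℝ) (hlam : 1 ≤ lam)
    (φ : ℝ → ℝ) (b : ℝ → ℂ) (p q : ℝ)
    (hsub : Set.Ioo p q ⊆ Set.Ioo (-1 : ℝ) 1)
    (h0 : (0 : ℝ) ∈ Set.Ioo p q)
    (hφ : ContDiffOn ℝ (⊤ : ℕ∞) φ (Set.Ioo (-1 : ℝ) 1))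
    (hb : ContDiff ℝ (⊤ : ℕ∞) b)
    (hsupp : tsupport b ⊆ Set.Ioo p q)
    (hφ'0 : |deriv φ 0| ≤ lam ^ (-(1 / 2) + δ : ℝ))
    (hφ'' : ∀ t ∈ Set.Ioo p q, lam ^ (-(δ / 2) : ℝ) ≤ deriv (deriv φ) t ∧
        deriv (deriv φ) t ≤ lam ^ (δ / 2 : ℝ))
    (hbnorm : ∀ t : ℝ, ‖b t‖ ≤ 1)
    (hbderiv : ∀ t : ℝ, ‖deriv b t‖ ≤ lam ^ (1 / 2 : ℝ)) :
    ‖∫ t : ℝ, Complex.exp (Complex.I * lam * φ t) * b t‖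
      ≤ (10 + 4/δ) * lam ^ (-(1 / 2) + 2 * δ : ℝ) := by
  have hlam0 : (0:ℝ) < lam := lt_of_lt_of_le one_pos hlam
  have hpq : p < q := lt_trans h0.1 h0.2
  have hp0 : p < 0 := h0.1
  have h0q : (0:ℝ) < q := h0.2
  obtain ⟨hp1, hq1⟩ : -1 ≤ p ∧ q ≤ 1 := (Set.Ioo_subset_Ioo_iff hpq).mp hsub
  set m : ℝ := lam ^ (-(δ / 2) : ℝ) with hm_def
  set M : ℝ := lam ^ (δ / 2 : ℝ) with hM_def
  set ε : ℝ := lam ^ (-(1 / 2) + δ : ℝ) with hε_def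
  set T : ℝ := lam ^ (-(1 / 2) + 2 * δ : ℝ) with hT_def
  set ρ : ℝ := 2 * ε * M with hρ_def
  have hm : 0 < m := Real.rpow_pos_of_pos hlam0 _
  have hM : 0 < M := Real.rpow_pos_of_pos hlam0 _
  have hε : 0 < ε := Real.rpow_pos_of_pos hlam0 _
  have hT : 0 < T := Real.rpow_pos_of_pos hlam0 _
  have hρ : 0 < ρ := by positivity
  have hmM : m * M = 1 := by
    rw [hm_def, hM_def, ← Real.rpow_add hlam0]
    norm_num
  have hmρ : m * ρ = 2 * ε := by
    rw [hρ_def]; linear_combination 2 * ε * hmM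
  -- choice of the compact support interval [p', q']
  have hbsuppc : IsCompact (tsupport b) := by
    apply IsCompact.of_isClosed_subset isCompact_Icc (isClosed_tsupport b)
    exact fun x hx => Set.Ioo_subset_Icc_self (hsub (hsupp hx))
  set K : Set ℝ := tsupport b ∪ Set.Icc (p/2) (q/2) with hK_def
  have hKc : IsCompact K := hbsuppc.union isCompact_Icc
  have hKne : K.Nonempty := ⟨0, Or.inr ⟨by linarith only [hp0], by linarith only [h0q]⟩⟩
  have hKsub : K ⊆ Set.Ioo p q := by
    intro x hx
    rcases hx with hx | hx
    · exact hsupp hx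
    · exact ⟨by nlinarith only [hx.1, hp0], by nlinarith only [hx.2, h0q]⟩
  set p' : ℝ := sInf K with hp'_def
  set q' : ℝ := sSup K with hq'_def
  have hp'K : p' ∈ K := hKc.sInf_mem hKne
  have hq'K : q' ∈ K := hKc.sSup_mem hKne
  have hp'Ioo : p' ∈ Set.Ioo p q := hKsub hp'K
  have hq'Ioo : q' ∈ Set.Ioo p q := hKsub hq'K
  have hp'neg : p' ≤ p/2 := csInf_le hKc.bddBelow (Or.inr ⟨le_refl _, by linarith only [hp0, h0q]⟩)
  have hq'pos : q/2 ≤ q' := le_csSup hKc.bddAbove (Or.inr ⟨by linarith only [hp0, h0q], le_refl _⟩)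
  have hp'0 : p' < 0 := lt_of_le_of_lt hp'neg (by linarith only [hp0])
  have h0q' : 0 < q' := lt_of_lt_of_le (by linarith only [h0q]) hq'pos
  have hp'q' : p' ≤ q' := le_of_lt (lt_trans hp'0 h0q')
  have hq'1 : q' ≤ 1 := le_of_lt (lt_of_lt_of_le hq'Ioo.2 hq1)
  have hp'1 : -1 ≤ p' := le_of_lt (lt_of_le_of_lt hp1 hp'Ioo.1)
  have hIccsub : Set.Icc p' q' ⊆ Set.Ioo p q := fun x hx =>
    ⟨lt_of_lt_of_le hp'Ioo.1 hx.1, lt_of_le_of_lt hx.2 hq'Ioo.2⟩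
  have hsupp' : tsupport b ⊆ Set.Icc p' q' := fun x hx =>
    ⟨csInf_le hKc.bddBelow (Or.inl hx), le_csSup hKc.bddAbove (Or.inl hx)⟩
  -- the integrand
  set F : ℝ → ℂ := fun t => Complex.exp (Complex.I * lam * φ t) * b t with hF_def
  have hFzero : ∀ x ∉ tsupport b, F x = 0 := by
    intro x hx
    simp [hF_def, image_eq_zero_of_notMem_tsupport hx]
  have hFcont : Continuous F := by
    rw [continuous_iff_continuousAt]
    intro t
    by_cases ht : t ∈ Set.Ioo (-1:ℝ) 1
    · have hφc : ContinuousAt φ t :=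
        (hφ.continuousOn.continuousAt (isOpen_Ioo.mem_nhds ht))
      exact (Complex.continuous_exp.continuousAt.comp
        ((continuousAt_const.mul (Complex.continuous_ofReal.continuousAt.comp hφc)))).mul
        (hb.continuous.continuousAt)
    · have htn : t ∉ tsupport b := fun h => ht (hsub (hsupp h))
      apply Filter.EventuallyEq.continuousAt (y := 0)
      filter_upwards [(isClosed_tsupport b).isOpen_compl.mem_nhds htn] with x hx
      exact hFzero x hx
  have hFsupp : HasCompactSupport F := by
    apply IsCompact.of_isClosed_subset hbsuppc (isClosed_tsupport F)
    apply closure_minimal _ (isClosed_tsupport b)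
    intro x hx
    by_contra hxn
    exact hx (hFzero x hxn)
  have hred : ∫ t : ℝ, F t = ∫ t in p'..q', F t := by
    rw [intervalIntegral.integral_of_le hp'q', ← integral_Icc_eq_integral_Ioc]
    exact (setIntegral_eq_integral_of_forall_compl_eq_zero
      (fun x hx => hFzero x (fun h => hx (hsupp' h)))).symm
  set c₁ : ℝ := max p' (-ρ) with hc₁_def
  set c₂ : ℝ := min q' ρ with hc₂_def
  have hc₁0 : c₁ ≤ 0 := max_le (le_of_lt hp'0) (by linarith only [hρ])
  have h0c₂ : 0 ≤ c₂ := le_min (le_of_lt h0q') (le_of_lt hρ)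
  have hp'c₁ : p' ≤ c₁ := le_max_left _ _
  have hc₂q' : c₂ ≤ q' := min_le_left _ _
  have hc₁c₂ : c₁ ≤ c₂ := le_trans hc₁0 h0c₂
  have hFii : ∀ x y : ℝ, IntervalIntegrable F volume x y :=
    fun x y => hFcont.intervalIntegrable x y
  have hsplit : ∫ t in p'..q', F t
      = (∫ t in p'..c₁, F t) + (∫ t in c₁..c₂, F t) + ∫ t in c₂..q', F t := by
    rw [integral_add_adjacent_intervals (hFii p' c₁) (hFii c₁ c₂),
      integral_add_adjacent_intervals (hFii p' c₂) (hFii c₂ q')]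
  -- norm of F is at most 1
  have hFnorm : ∀ t : ℝ, ‖F t‖ ≤ 1 := by
    intro t
    rw [hF_def]
    calc ‖Complex.exp (Complex.I * lam * φ t) * b t‖
        = ‖b t‖ := by rw [norm_mul, norm_exp_I_mul, one_mul]
      _ ≤ 1 := hbnorm t
  -- middle piece
  have hmid : ‖∫ t in c₁..c₂, F t‖ ≤ 2 * ρ := by
    have := intervalIntegral.norm_integral_le_of_norm_le_const
      (C := 1) (f := F) (a := c₁) (b := c₂) (fun x _ => hFnorm x)
    refine this.trans ?_
    rw [one_mul, abs_of_nonneg (by linarith only [hc₁c₂])]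
    have h1 : c₂ ≤ ρ := min_le_right _ _
    have h2 : -ρ ≤ c₁ := le_max_right _ _
    linarith only [h1, h2]
  -- derivative plumbing
  have hsubIq : Set.Ioo p q ⊆ Set.Ioo (-1:ℝ) 1 := hsub
  have hφ' : ContDiffOn ℝ (⊤ : ℕ∞) (deriv φ) (Set.Ioo (-1:ℝ) 1) :=
    hφ.deriv_of_isOpen isOpen_Ioo (by simp)
  have hφ''cd : ContDiffOn ℝ (⊤ : ℕ∞) (deriv (deriv φ)) (Set.Ioo (-1:ℝ) 1) :=
    hφ'.deriv_of_isOpen isOpen_Ioo (by simp)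
  have hφd : ∀ t ∈ Set.Ioo (-1:ℝ) 1, HasDerivAt φ (deriv φ t) t := fun t ht =>
    (((hφ.differentiableOn (by simp)).differentiableAt (isOpen_Ioo.mem_nhds ht)).hasDerivAt)
  have hφ'd : ∀ t ∈ Set.Ioo (-1:ℝ) 1, HasDerivAt (deriv φ) (deriv (deriv φ) t) t := fun t ht =>
    (((hφ'.differentiableOn (by simp)).differentiableAt (isOpen_Ioo.mem_nhds ht)).hasDerivAt)
  have hφ''c : ContinuousOn (deriv (deriv φ)) (Set.Ioo (-1:ℝ) 1) := hφ''cd.continuousOn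
  have hbd : ∀ t : ℝ, HasDerivAt b (deriv b t) t := fun t =>
    ((hb.differentiable (by simp)) t).hasDerivAt
  have hb'c : Continuous (deriv b) := (contDiff_infty_iff_deriv.mp (hb.of_le (by simp))).2.continuous
  -- mean value estimates for deriv φ
  have hMVT : ∀ x ∈ Set.Ioo p q, ∀ y ∈ Set.Ioo p q, x ≤ y →
      m * (y - x) ≤ deriv φ y - deriv φ x := by
    apply Convex.mul_sub_le_image_sub_of_le_deriv (convex_Ioo p q)
    · exact (hφ'.continuousOn).mono hsubIq
    · rw [interior_Ioo]
      exact ((hφ'.differentiableOn (by simp)).mono hsubIq)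
    · rw [interior_Ioo]
      intro x hx
      exact (hφ'' x hx).1
  have hmul : ∀ x y : ℝ, lam ^ (x:ℝ) * lam ^ (y:ℝ) = lam ^ (x+y:ℝ) :=
    fun x y => (Real.rpow_add hlam0 x y).symm
  have hle : ∀ x y : ℝ, x ≤ y → lam ^ (x:ℝ) ≤ lam ^ (y:ℝ) :=
    fun x y h => Real.rpow_le_rpow_of_exponent_le hlam h
  have hlogle : Real.log lam ≤ (2/δ) * M := by
    have h1 : Real.log M = (δ/2) * Real.log lam := by
      rw [hM_def]; exact Real.log_rpow hlam0 _
    have h2 : Real.log M ≤ M - 1 := Real.log_le_sub_one_of_pos hM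
    have h3 : (δ/2) * Real.log lam ≤ M := by rw [← h1]; linarith only [h2, hM]
    have h4 : Real.log lam = (2/δ) * ((δ/2) * Real.log lam) := by field_simp
    rw [h4]
    exact mul_le_mul_of_nonneg_left h3 (by positivity)
  have hρ_low : lam ^ (-(1/2) : ℝ) ≤ ρ := by
    have hεM : ε * M = lam ^ ((-(1/2)+δ)+δ/2 : ℝ) := by
      rw [hε_def, hM_def]; exact (Real.rpow_add hlam0 _ _).symm
    have h1 : lam ^ (-(1/2):ℝ) ≤ lam ^ ((-(1/2)+δ)+δ/2 : ℝ) := hle _ _ (by linarith only [hδ0])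
    have h2 : ε * M ≤ ρ := by rw [hρ_def]; nlinarith only [mul_pos hε hM]
    rw [← hεM] at h1
    linarith only [h1, h2]
  have hεinv : ε⁻¹ = lam ^ ((1/2) - δ : ℝ) := by
    rw [hε_def, ← Real.rpow_neg hlam0.le]; congr 1; ring
  have hminv : m⁻¹ = M := by
    rw [hm_def, hM_def, ← Real.rpow_neg hlam0.le]; congr 1; ring
  have hlaminv : lam⁻¹ = lam ^ (-1 : ℝ) := (Real.rpow_neg_one lam).symm
  have hnum : ∀ c' : ℝ, ρ ≤ c' → c' ≤ 1 →
      (1/lam) * (3*1/((m/2)*ρ) + (lam ^ (1/2:ℝ)/(m/2)) * Real.log (c'/ρ)) ≤ (3 + 2/δ) * T := by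
    intro c' hρc' hc'1
    have e1 : (m/2) * ρ = ε := by linarith only [hmρ]
    rw [e1]
    have hc'pos : 0 < c' := lt_of_lt_of_le hρ hρc'
    have hlog0 : 0 ≤ Real.log (c'/ρ) := Real.log_nonneg ((one_le_div hρ).mpr hρc')
    have hlogup : Real.log (c'/ρ) ≤ (1/δ) * M := by
      have h1 : c'/ρ ≤ lam ^ (1/2:ℝ) := by
        have h2 : c'/ρ ≤ 1/ρ := by gcongr
        refine h2.trans ?_
        have h3 : (lam ^ (-(1/2):ℝ))⁻¹ = lam ^ ((1/2):ℝ) := by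
          rw [← Real.rpow_neg hlam0.le]; norm_num
        calc 1/ρ = ρ⁻¹ := one_div ρ
          _ ≤ (lam ^ (-(1/2):ℝ))⁻¹ := inv_anti₀ (Real.rpow_pos_of_pos hlam0 _) hρ_low
          _ = lam ^ ((1/2):ℝ) := h3
      calc Real.log (c'/ρ) ≤ Real.log (lam ^ (1/2:ℝ)) :=
            Real.log_le_log (div_pos hc'pos hρ) h1
        _ = (1/2) * Real.log lam := Real.log_rpow hlam0 _
        _ ≤ (1/δ) * M := by
            have h6 := mul_le_mul_of_nonneg_left hlogle (by norm_num : (0:ℝ) ≤ 1/2)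
            have h7 : (1/2) * ((2/δ) * M) = (1/δ) * M := by ring
            linarith only [h6, h7]
    have hA : (1/lam) * (3*1/ε) ≤ 3 * T := by
      have h4 : lam⁻¹ * ε⁻¹ = lam ^ (-(1/2) - δ : ℝ) := by
        rw [hlaminv, hεinv, hmul]; congr 1; ring
      calc (1/lam)*(3*1/ε) = 3 * (lam⁻¹ * ε⁻¹) := by ring
        _ = 3 * lam ^ (-(1/2) - δ : ℝ) := by rw [h4]
        _ ≤ 3 * T := by
            rw [hT_def]
            exact mul_le_mul_of_nonneg_left (hle _ _ (by linarith only [hδ0])) (by norm_num)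
    have h2M : (m/2)⁻¹ = 2*M := by
      rw [inv_div, div_eq_mul_inv, hminv, mul_comm]
    have hB2 : (1/lam) * ((lam ^ (1/2:ℝ)/(m/2)) * Real.log (c'/ρ)) ≤ (2/δ) * T := by
      rw [div_eq_mul_inv (lam ^ (1/2:ℝ)), h2M]
      have h5 : lam⁻¹ * lam ^ (1/2:ℝ) * M * M = lam ^ (-(1/2) + δ : ℝ) := by
        rw [hlaminv, hM_def, hmul, hmul, hmul]; congr 1; ring
      have hpos1 : (0:ℝ) ≤ lam⁻¹ * lam ^ (1/2:ℝ) * M := by positivity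
      calc (1/lam) * ((lam ^ (1/2:ℝ) * (2*M)) * Real.log (c'/ρ))
          = 2 * ((lam⁻¹ * lam ^ (1/2:ℝ) * M) * Real.log (c'/ρ)) := by
            rw [one_div]; ring
        _ ≤ 2 * ((lam⁻¹ * lam ^ (1/2:ℝ) * M) * ((1/δ) * M)) := by
            apply mul_le_mul_of_nonneg_left (mul_le_mul_of_nonneg_left hlogup hpos1) (by norm_num)
        _ = (2/δ) * (lam⁻¹ * lam ^ (1/2:ℝ) * M * M) := by ring
        _ = (2/δ) * lam ^ (-(1/2) + δ : ℝ) := by rw [h5]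
        _ ≤ (2/δ) * T := by
            rw [hT_def]
            exact mul_le_mul_of_nonneg_left (hle _ _ (by linarith only [hδ0])) (by positivity)
    calc (1/lam) * (3*1/ε + (lam ^ (1/2:ℝ)/(m/2)) * Real.log (c'/ρ))
        = (1/lam) * (3*1/ε) + (1/lam) * ((lam ^ (1/2:ℝ)/(m/2)) * Real.log (c'/ρ)) := by ring
      _ ≤ 3 * T + (2/δ) * T := add_le_add hA hB2
      _ = (3 + 2/δ) * T := by ring
  -- right tail
  have hright : ‖∫ t in c₂..q', F t‖ ≤ (3 + 2/δ) * T := by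
    rcases le_or_gt q' ρ with hcase | hcase
    · rw [hc₂_def, min_eq_left hcase, intervalIntegral.integral_same]
      simpa using le_of_lt (by positivity : (0:ℝ) < (3 + 2/δ) * T)
    · have hc₂ρ : c₂ = ρ := min_eq_right hcase.le
      rw [hc₂ρ]
      have hIccρ : Set.Icc ρ q' ⊆ Set.Ioo p q := fun x hx =>
        ⟨lt_of_lt_of_le (lt_trans hp0 hρ) hx.1, lt_of_le_of_lt hx.2 hq'Ioo.2⟩
      have hIcc1 : Set.Icc ρ q' ⊆ Set.Ioo (-1:ℝ) 1 := fun x hx => hsubIq (hIccρ hx)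
      have hlow : ∀ t ∈ Set.Icc ρ q', (m/2) * t ≤ deriv φ t := by
        intro t ht
        have htIoo := hIccρ ht
        have h1 := hMVT 0 h0 t htIoo (le_trans hρ.le ht.1)
        have h2 : -ε ≤ deriv φ 0 := by
          have := abs_le.mp hφ'0; linarith only [this.1]
        have h3 : m * ρ ≤ m * t := mul_le_mul_of_nonneg_left ht.1 hm.le
        linarith only [h1, h2, h3, hmρ]
      have hbound := tail_bound lam (m/2) 1 (lam ^ (1/2:ℝ)) ρ q'
        φ (deriv φ) (deriv (deriv φ)) b (deriv b)
        hlam0 (by positivity) hρ hcase.le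
        (fun t ht => hφd t (hIcc1 ht))
        (fun t ht => hφ'd t (hIcc1 ht))
        (hφ''c.mono hIcc1)
        hlow
        (fun t ht => le_trans hm.le (hφ'' t (hIccρ ht)).1)
        (fun t _ => hbd t)
        (hb'c.continuousOn)
        (fun t _ => hbnorm t)
        (fun t _ => hbderiv t)
      calc ‖∫ t in ρ..q', F t‖
          = ‖∫ t in ρ..q', Complex.exp (Complex.I * lam * φ t) * b t‖ := rfl
        _ ≤ (1/lam) * (3*1/((m/2)*ρ) + (lam ^ (1/2:ℝ)/(m/2)) * Real.log (q'/ρ)) := hbound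
        _ ≤ (3 + 2/δ) * T := hnum q' hcase.le hq'1
  -- left tail
  have hleft : ‖∫ t in p'..c₁, F t‖ ≤ (3 + 2/δ) * T := by
    rcases le_or_gt (-ρ) p' with hcase | hcase
    · rw [hc₁_def, max_eq_left hcase, intervalIntegral.integral_same]
      simpa using le_of_lt (by positivity : (0:ℝ) < (3 + 2/δ) * T)
    · have hc₁ρ : c₁ = -ρ := max_eq_right hcase.le
      rw [hc₁ρ]
      have hcomp : ∫ t in p'..(-ρ), F t = ∫ s in ρ..(-p'), F (-s) := by
        have h := intervalIntegral.integral_comp_neg (a := ρ) (b := -p') (f := F)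
        rw [neg_neg] at h
        exact h.symm
      rw [hcomp]
      have hρp' : ρ ≤ -p' := by linarith only [hcase]
      have hmaps : ∀ s ∈ Set.Icc ρ (-p'), -s ∈ Set.Ioo p q := by
        intro s hs
        constructor
        · have h1 : p' ≤ -s := by linarith only [hs.2]
          exact lt_of_lt_of_le hp'Ioo.1 h1
        · have h1 : -s ≤ -ρ := by linarith only [hs.1]
          exact lt_of_le_of_lt h1 (by linarith only [hρ, h0q])
      have hmaps1 : ∀ s ∈ Set.Icc ρ (-p'), -s ∈ Set.Ioo (-1:ℝ) 1 :=
        fun s hs => hsubIq (hmaps s hs)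
      have hlow : ∀ s ∈ Set.Icc ρ (-p'), (m/2) * s ≤ -(deriv φ (-s)) := by
        intro s hs
        have htIoo := hmaps s hs
        have hs0 : -s ≤ 0 := by linarith only [hs.1, hρ]
        have h1 := hMVT (-s) htIoo 0 h0 hs0
        have h2 : deriv φ 0 ≤ ε := by
          have := abs_le.mp hφ'0; linarith only [this.2]
        have h3 : m * ρ ≤ m * s := mul_le_mul_of_nonneg_left hs.1 hm.le
        linarith only [h1, h2, h3, hmρ]
      have hbound := tail_bound lam (m/2) 1 (lam ^ (1/2:ℝ)) ρ (-p')
        (fun s => φ (-s)) (fun s => -(deriv φ (-s))) (fun s => deriv (deriv φ) (-s))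
        (fun s => b (-s)) (fun s => -(deriv b (-s)))
        hlam0 (by positivity) hρ hρp'
        (fun s hs => by
          have h := (hφd (-s) (hmaps1 s hs)).comp s (hasDerivAt_neg s)
          simpa [Function.comp_def] using h)
        (fun s hs => by
          have h := ((hφ'd (-s) (hmaps1 s hs)).comp s (hasDerivAt_neg s)).neg
          simpa [Function.comp_def, Pi.neg_def] using h)
        (by
          have h := ContinuousOn.comp hφ''c (continuous_neg.continuousOn)
            (fun s hs => hmaps1 s hs)
          exact h)
        hlow
        (fun s hs => le_trans hm.le (hφ'' (-s) (hmaps s hs)).1)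
        (fun s _ => by
          have h := HasDerivAt.scomp s (hbd (-s)) (hasDerivAt_neg s)
          simpa [Function.comp_def] using h)
        (((hb'c.comp continuous_neg).neg).continuousOn)
        (fun s _ => hbnorm (-s))
        (fun s _ => by rw [norm_neg]; exact hbderiv (-s))
      calc ‖∫ s in ρ..(-p'), F (-s)‖
          = ‖∫ s in ρ..(-p'), Complex.exp (Complex.I * lam * φ (-s)) * b (-s)‖ := rfl
        _ ≤ (1/lam) * (3*1/((m/2)*ρ) + (lam ^ (1/2:ℝ)/(m/2)) * Real.log ((-p')/ρ)) := hbound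
        _ ≤ (3 + 2/δ) * T := hnum (-p') hρp' (by linarith only [hp'1])
  -- conclusion
  have hρT : 2 * ρ ≤ 4 * T := by
    have hεM : ε * M = lam ^ ((-(1/2)+δ)+δ/2 : ℝ) := by
      rw [hε_def, hM_def]; exact (Real.rpow_add hlam0 _ _).symm
    have h1 : lam ^ ((-(1/2)+δ)+δ/2 : ℝ) ≤ T := by
      rw [hT_def]; exact hle _ _ (by linarith only [hδ0])
    have h2 : ε * M ≤ T := by rw [hεM]; exact h1
    rw [hρ_def]; linarith only [h2]
  rw [hred, hsplit]
  calc ‖(∫ t in p'..c₁, F t) + (∫ t in c₁..c₂, F t) + ∫ t in c₂..q', F t‖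
      ≤ ‖(∫ t in p'..c₁, F t) + (∫ t in c₁..c₂, F t)‖ + ‖∫ t in c₂..q', F t‖ :=
        norm_add_le _ _
    _ ≤ ‖∫ t in p'..c₁, F t‖ + ‖∫ t in c₁..c₂, F t‖ + ‖∫ t in c₂..q', F t‖ := by
        have := norm_add_le (∫ t in p'..c₁, F t) (∫ t in c₁..c₂, F t)
        linarith only [this]
    _ ≤ ((3 + 2/δ) * T) + 2*ρ + ((3 + 2/δ) * T) := by
        have := hmid
        linarith only [this, hleft, hright]
    _ ≤ ((3 + 2/δ) * T) + 4*T + ((3 + 2/δ) * T) := by linarith only [hρT]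
    _ = (10 + 4/δ) * T := by ring


/-- **Stationary phase with lower bounds on the second derivative** (Lemma 4.2 of
Sogge–Xi–Zhang).  Let `J(λ) = ∫ e^{iλφ(t)} b(t) dt`, `λ ≥ 1`, with `b ∈ C_0^∞(ℐ)`
for an open interval `ℐ = (p,q) ⊂ (-1,1)` containing `0`, and `φ ∈ C^∞((-1,1))`
real valued.  If `|φ'(0)| ≤ λ^{-1/2+δ}`, `λ^{-δ/2} ≤ |φ''(t)| ≤ λ^{δ/2}` on `ℐ`,
`|b| ≤ 1` and `|b'| ≤ λ^{1/2}`, then for `0 < δ ≤ 1/4` there is `C = C_δ` with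
`|J(λ)| ≤ C λ^{-1/2+2δ}`. -/
theorem stationary_phase_second_derivative_bound
    (δ : ℝ) (hδ0 : 0 < δ) (hδ1 : δ ≤ 1 / 4) :
    ∃ C : ℝ, ∀ lam : ℝ, 1 ≤ lam →
      ∀ (φ : ℝ → ℝ) (b : ℝ → ℂ) (p q : ℝ),
        Set.Ioo p q ⊆ Set.Ioo (-1 : ℝ) 1 →
        (0 : ℝ) ∈ Set.Ioo p q →
        ContDiffOn ℝ (⊤ : ℕ∞) φ (Set.Ioo (-1 : ℝ) 1) →
        ContDiff ℝ (⊤ : ℕ∞) b →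
        tsupport b ⊆ Set.Ioo p q →
        |deriv φ 0| ≤ lam ^ (-(1 / 2) + δ : ℝ) →
        (∀ t ∈ Set.Ioo p q,
          lam ^ (-(δ / 2) : ℝ) ≤ |deriv (deriv φ) t| ∧
            |deriv (deriv φ) t| ≤ lam ^ (δ / 2 : ℝ)) →
        (∀ t : ℝ, ‖b t‖ ≤ 1) →
        (∀ t : ℝ, ‖deriv b t‖ ≤ lam ^ (1 / 2 : ℝ)) →
        ‖∫ t : ℝ, Complex.exp (Complex.I * lam * φ t) * b t‖
          ≤ C * lam ^ (-(1 / 2) + 2 * δ : ℝ) := by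
  refine ⟨10 + 4/δ, ?_⟩
  intro lam hlam φ b p q hsub h0 hφ hb hsupp hφ'0 hφ'' hbnorm hbderiv
  have hlam0 : (0:ℝ) < lam := lt_of_lt_of_le one_pos hlam
  have hm : (0:ℝ) < lam ^ (-(δ/2) : ℝ) := Real.rpow_pos_of_pos hlam0 _
  have hφ''cont : ContinuousOn (deriv (deriv φ)) (Set.Ioo p q) :=
    ((((hφ.deriv_of_isOpen isOpen_Ioo (by simp) : ContDiffOn ℝ (⊤ : ℕ∞) (deriv φ) (Set.Ioo (-1:ℝ) 1)).deriv_of_isOpen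
      isOpen_Ioo (by simp) : ContDiffOn ℝ (⊤ : ℕ∞) (deriv (deriv φ)) (Set.Ioo (-1:ℝ) 1))).continuousOn).mono hsub
  have habs : ∀ t ∈ Set.Ioo p q,
      lam ^ (-(δ / 2) : ℝ) ≤ deriv (deriv φ) t ∨
        deriv (deriv φ) t ≤ -(lam ^ (-(δ / 2) : ℝ)) := by
    intro t ht
    have h1 := (hφ'' t ht).1
    rcases le_or_gt 0 (deriv (deriv φ) t) with h | h
    · left; rwa [abs_of_nonneg h] at h1
    · right; rw [abs_of_neg h] at h1; linarith only [h1]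
  have hsign : (∀ t ∈ Set.Ioo p q, lam ^ (-(δ / 2) : ℝ) ≤ deriv (deriv φ) t)
      ∨ (∀ t ∈ Set.Ioo p q, deriv (deriv φ) t ≤ -(lam ^ (-(δ / 2) : ℝ))) := by
    by_cases hc : ∀ t ∈ Set.Ioo p q, lam ^ (-(δ / 2) : ℝ) ≤ deriv (deriv φ) t
    · exact Or.inl hc
    · right
      push_neg at hc
      obtain ⟨t₀, ht₀, hlt⟩ := hc
      have ht₀neg : deriv (deriv φ) t₀ ≤ -(lam ^ (-(δ / 2) : ℝ)) := by
        rcases habs t₀ ht₀ with h | h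
        · linarith only [h, hlt]
        · exact h
      intro t ht
      rcases habs t ht with h | h
      · exfalso
        have hcont : ContinuousOn (deriv (deriv φ)) (Set.uIcc t₀ t) :=
          hφ''cont.mono (Set.ordConnected_Ioo.uIcc_subset ht₀ ht)
        have h0mem : (0:ℝ) ∈ Set.uIcc (deriv (deriv φ) t₀) (deriv (deriv φ) t) := by
          rw [Set.mem_uIcc]
          left
          exact ⟨by linarith only [ht₀neg, hm], by linarith only [h, hm]⟩
        obtain ⟨x, hx, hfx⟩ := intermediate_value_uIcc hcont h0mem
        have hxIoo : x ∈ Set.Ioo p q := (Set.ordConnected_Ioo.uIcc_subset ht₀ ht) hx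
        have h2 := (hφ'' x hxIoo).1
        rw [hfx] at h2
        simp only [abs_zero] at h2
        linarith only [h2, hm]
      · exact h
  rcases hsign with hpos | hneg
  · exact key δ hδ0 hδ1 lam hlam φ b p q hsub h0 hφ hb hsupp hφ'0
      (fun t ht => ⟨hpos t ht, le_trans (le_abs_self _) (hφ'' t ht).2⟩) hbnorm hbderiv
  · -- apply key to -φ and conj ∘ b
    set φ₂ : ℝ → ℝ := fun t => -φ t with hφ₂_def
    set b₂ : ℝ → ℂ := fun t => (starRingEnd ℂ) (b t) with hb₂_def
    have hbd : ∀ t : ℝ, HasDerivAt b (deriv b t) t := fun t =>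
      ((hb.differentiable (by simp)) t).hasDerivAt
    have hb₂smooth : ContDiff ℝ (⊤ : ℕ∞) b₂ := by
      have : b₂ = Complex.conjCLE.toContinuousLinearMap ∘ b :=
        funext fun t => (Complex.conjCLE_apply (b t)).symm
      rw [this]
      exact Complex.conjCLE.toContinuousLinearMap.contDiff.comp hb
    have hsupp₂ : tsupport b₂ ⊆ Set.Ioo p q := by
      refine subset_trans ?_ hsupp
      apply closure_minimal _ (isClosed_tsupport b)
      intro x hx
      apply subset_tsupport b
      simp only [Function.mem_support] at hx ⊢
      intro hbx
      exact hx (by rw [hb₂_def]; simp [hbx])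
    have hd1eq : deriv φ₂ = fun x => -deriv φ x := deriv.neg'
    have hd2eq : ∀ t : ℝ, deriv (deriv φ₂) t = -(deriv (deriv φ) t) := by
      intro t
      rw [hd1eq]
      exact deriv.neg
    have hb₂deriv : ∀ t : ℝ, deriv b₂ t = (starRingEnd ℂ) (deriv b t) := fun t =>
      ((hbd t).star).deriv
    have hk := key δ hδ0 hδ1 lam hlam φ₂ b₂ p q hsub h0 hφ.neg hb₂smooth hsupp₂
      (by
        have : deriv φ₂ 0 = -(deriv φ 0) := by rw [hd1eq]
        rw [this, abs_neg]
        exact hφ'0)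
      (by
        intro t ht
        rw [hd2eq t]
        constructor
        · linarith only [hneg t ht]
        · calc -(deriv (deriv φ) t) ≤ |deriv (deriv φ) t| := neg_le_abs _
            _ ≤ lam ^ (δ / 2 : ℝ) := (hφ'' t ht).2)
      (fun t => by rw [hb₂_def]; simp only [RCLike.norm_conj]; exact hbnorm t)
      (fun t => by rw [hb₂deriv t, RCLike.norm_conj]; exact hbderiv t)
    have hptwise : ∀ t : ℝ, Complex.exp (Complex.I * lam * φ₂ t) * b₂ t
        = (starRingEnd ℂ) (Complex.exp (Complex.I * lam * φ t) * b t) := by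
      intro t
      rw [map_mul, ← Complex.exp_conj]
      congr 1
      simp only [hφ₂_def, map_mul, Complex.conj_I, Complex.conj_ofReal, Complex.ofReal_neg]
      ring_nf
    calc ‖∫ t : ℝ, Complex.exp (Complex.I * lam * φ t) * b t‖
        = ‖(starRingEnd ℂ) (∫ t : ℝ, Complex.exp (Complex.I * lam * φ t) * b t)‖ :=
          (RCLike.norm_conj _).symm
      _ = ‖∫ t : ℝ, (starRingEnd ℂ) (Complex.exp (Complex.I * lam * φ t) * b t)‖ := by
          rw [integral_conj]
      _ = ‖∫ t : ℝ, Complex.exp (Complex.I * lam * φ₂ t) * b₂ t‖ := by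
          simp_rw [hptwise]
      _ ≤ (10 + 4/δ) * lam ^ (-(1 / 2) + 2 * δ : ℝ) := hk
end
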